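/- arXiv:2204.02736 — 14 statements merged into one kernel-verified Lean document; each statement's English description precedes it below -/
import Mathlib

section
/- Let f be a natural number and let V : ℕ → ℕ be a finitely supported function with V k = 0 for all k < 3. Assume (as integers) f = 6 + ∑ₖ (k − 3)·(V k) and V 3 = 8 + ∑_{k ≥ 4} (k − 4)·(V k). Then 2·V 3 + V 4 − f = 10 + ∑_{k ≥ 5} (k − 5)·(V k) as integers; in particular 2·V 3 + V 4 > f. -/
open Finset

/-- Arithmetic core of Lemma 3.8:
`2 V 3 + V 4 - f = 10 + ∑_{k ≥ 5} (k-5) V k`, hence `2 V 3 + V 4 > f`. -/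
theorem stmt_3 (f : ℕ) (V : ℕ →₀ ℕ) (hV : ∀ k < 3, V k = 0)
    (h1 : (f : ℤ) = 6 + ∑ k ∈ V.support, ((k : ℤ) - 3) * (V k : ℤ))
    (h2 : (V 3 : ℤ) = 8 + ∑ k ∈ V.support.filter (fun k => 4 ≤ k), ((k : ℤ) - 4) * (V k : ℤ)) :
    2 * (V 3 : ℤ) + (V 4 : ℤ) - (f : ℤ) =
      10 + ∑ k ∈ V.support.filter (fun k => 5 ≤ k), ((k : ℤ) - 5) * (V k : ℤ) ∧
    (f : ℤ) < 2 * (V 3 : ℤ) + (V 4 : ℤ) := by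
  have hsupp : ∀ k ∈ V.support, 3 ≤ k := by
    intro k hk
    by_contra h
    exact (Finsupp.mem_support_iff.mp hk) (hV k (by omega))
  -- restrict h1's sum to k ≥ 4
  have h1' : (f : ℤ) = 6 + ∑ k ∈ V.support.filter (fun k => 4 ≤ k),
      ((k : ℤ) - 3) * (V k : ℤ) := by
    rw [h1]
    congr 1
    rw [Finset.sum_filter_of_ne]
    intro k hk hne
    have h3 := hsupp k hk
    by_contra h
    have : k = 3 := by omega
    subst this
    simp at hne
  -- split the filter 4 ≤ k into k = 4 and 5 ≤ k
  have split : ∀ g : ℕ → ℤ, ∑ k ∈ V.support.filter (fun k => 4 ≤ k), g k =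
      (if 4 ∈ V.support then g 4 else 0) +
      ∑ k ∈ V.support.filter (fun k => 5 ≤ k), g k := by
    intro g
    have hf : V.support.filter (fun k => 4 ≤ k) =
        V.support.filter (fun k => k = 4 ∨ 5 ≤ k) := by
      apply Finset.filter_congr
      intro k _; constructor <;> omega
    rw [hf]
    have : (fun k : ℕ => k = 4 ∨ 5 ≤ k) = fun k => (k = 4) ∨ (5 ≤ k) := rfl
    rw [Finset.filter_or, Finset.sum_union]
    · congr 1
      rw [Finset.filter_eq']
      split
      · exact Finset.sum_singleton _ _
      · exact Finset.sum_empty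
    · rw [Finset.disjoint_left]
      intro a ha hb
      simp only [Finset.mem_filter] at ha hb
      omega
  have hV4 : 4 ∉ V.support → (V 4 : ℤ) = 0 := by
    intro h
    simp [Finsupp.notMem_support_iff.mp h]
  have e1 := split (fun k => ((k : ℤ) - 3) * (V k : ℤ))
  have e2 := split (fun k => ((k : ℤ) - 4) * (V k : ℤ))
  -- relate (k-3), (k-4), (k-5) sums over k ≥ 5
  have e3 : ∑ k ∈ V.support.filter (fun k => 5 ≤ k), ((k : ℤ) - 3) * (V k : ℤ)
      = ∑ k ∈ V.support.filter (fun k => 5 ≤ k), ((k : ℤ) - 4) * (V k : ℤ)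
      + ∑ k ∈ V.support.filter (fun k => 5 ≤ k), (V k : ℤ) := by
    rw [← Finset.sum_add_distrib]
    apply Finset.sum_congr rfl
    intro k _; ring
  have e4 : ∑ k ∈ V.support.filter (fun k => 5 ≤ k), ((k : ℤ) - 4) * (V k : ℤ)
      = ∑ k ∈ V.support.filter (fun k => 5 ≤ k), ((k : ℤ) - 5) * (V k : ℤ)
      + ∑ k ∈ V.support.filter (fun k => 5 ≤ k), (V k : ℤ) := by
    rw [← Finset.sum_add_distrib]
    apply Finset.sum_congr rfl
    intro k _; ring
  have hT : 0 ≤ ∑ k ∈ V.support.filter (fun k => 5 ≤ k), ((k : ℤ) - 5) * (V k : ℤ) := by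
    apply Finset.sum_nonneg
    intro k hk
    simp only [Finset.mem_filter] at hk
    have : (5 : ℤ) ≤ (k : ℤ) := by exact_mod_cast hk.2
    exact mul_nonneg (by linarith) (Int.natCast_nonneg _)
  have hS : 0 ≤ ∑ k ∈ V.support.filter (fun k => 5 ≤ k), (V k : ℤ) := by
    apply Finset.sum_nonneg; intro k _; exact Int.natCast_nonneg _
  by_cases h4 : 4 ∈ V.support <;> simp [h4] at e1 e2
  · constructor <;> [linarith [h1', h2, e1, e2, e3, e4]; linarith]
  · have := hV4 h4
    constructor <;> [linarith [h1', h2, e1, e2, e3, e4]; linarith]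
end

section
/- Let f be a natural number and let V : ℕ → ℕ be a finitely supported function with V k = 0 for all k < 3. Assume (as integers) f = 6 + ∑ₖ (k − 3)·(V k) and ∑_{k ≥ 4} k·(V k) ≥ 3·f. Then V 4 ≥ 18, f ≥ 24, and f < 3·(V 4); moreover if f = 24 then V k = 0 for all k ≥ 5. -/
open Finset

/-- Helper: split a sum over `k ≥ 4` into the `k = 4` term and the sum over `k ≥ 5`. -/
lemma split_sum_at_four (s : Finset ℕ) (g : ℕ → ℤ) (hg4 : 4 ∉ s → g 4 = 0) :
    ∑ k ∈ s.filter (fun k => 4 ≤ k), g k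
      = g 4 + ∑ k ∈ s.filter (fun k => 5 ≤ k), g k := by
  classical
  rw [← Finset.sum_filter_add_sum_filter_not (s.filter (fun k => 4 ≤ k)) (fun k => 5 ≤ k) g]
  rw [Finset.filter_filter, Finset.filter_filter]
  have h1 : s.filter (fun k => 4 ≤ k ∧ 5 ≤ k) = s.filter (fun k => 5 ≤ k) := by
    apply Finset.filter_congr; intro k _; simp only [and_iff_right_iff_imp]; omega
  have h2 : ∑ k ∈ s.filter (fun k => 4 ≤ k ∧ ¬ 5 ≤ k), g k = g 4 := by
    by_cases h4 : 4 ∈ s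
    · have : s.filter (fun k => 4 ≤ k ∧ ¬ 5 ≤ k) = {4} := by
        ext k
        simp only [Finset.mem_filter, Finset.mem_singleton]
        constructor
        · rintro ⟨_, h, h'⟩; omega
        · rintro rfl; exact ⟨h4, by omega, by omega⟩
      rw [this, Finset.sum_singleton]
    · have : s.filter (fun k => 4 ≤ k ∧ ¬ 5 ≤ k) = ∅ := by
        apply Finset.filter_eq_empty_iff.mpr
        intro k hk
        rintro ⟨h, h'⟩
        have hk4 : k = 4 := by omega
        exact h4 (hk4 ▸ hk)
      rw [this, Finset.sum_empty, hg4 h4]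
  rw [h1, h2]; ring

/-- Arithmetic core of Lemma 3.10: if `f = 6 + ∑ (k-3) V k` and `∑_{k ≥ 4} k V k ≥ 3 f`,
then `V 4 ≥ 18`, `f ≥ 24`, `f < 3 V 4`, and `f = 24` forces no vertices of degree `≥ 5`. -/
theorem stmt_4 (f : ℕ) (V : ℕ →₀ ℕ) (hV : ∀ k < 3, V k = 0)
    (h1 : (f : ℤ) = 6 + ∑ k ∈ V.support, ((k : ℤ) - 3) * (V k : ℤ))
    (h2 : 3 * (f : ℤ) ≤ ∑ k ∈ V.support.filter (fun k => 4 ≤ k), (k : ℤ) * (V k : ℤ)) :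
    18 ≤ V 4 ∧ 24 ≤ f ∧ (f : ℤ) < 3 * (V 4 : ℤ) ∧
      (f = 24 → ∀ k, 5 ≤ k → V k = 0) := by
  classical
  set s := V.support with hs
  have hmem : ∀ k ∈ s, 3 ≤ k := by
    intro k hk
    by_contra h
    exact (Finsupp.mem_support_iff.mp hk) (hV k (by omega))
  have hV4 : 4 ∉ s → V 4 = 0 := fun h => Finsupp.notMem_support_iff.mp h
  set t := s.filter (fun k => 5 ≤ k) with ht
  set P : ℤ := ∑ k ∈ t, (V k : ℤ) with hP
  set Q : ℤ := ∑ k ∈ t, (k : ℤ) * (V k : ℤ) with hQ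
  have hPnn : 0 ≤ P := Finset.sum_nonneg fun k _ => by positivity
  have hQP : 5 * P ≤ Q := by
    rw [hQ, hP, Finset.mul_sum]
    apply Finset.sum_le_sum
    intro k hk
    have h5 : (5:ℤ) ≤ (k:ℤ) := by exact_mod_cast (Finset.mem_filter.mp hk).2
    have h0 : (0:ℤ) ≤ (V k : ℤ) := by positivity
    nlinarith
  -- rewrite h1
  have e0 : ∑ k ∈ s, ((k : ℤ) - 3) * (V k : ℤ)
      = ∑ k ∈ s.filter (fun k => 4 ≤ k), ((k : ℤ) - 3) * (V k : ℤ) := by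
    rw [← Finset.sum_filter_add_sum_filter_not s (fun k => 4 ≤ k)
        (fun k => ((k : ℤ) - 3) * (V k : ℤ))]
    have : ∑ k ∈ s.filter (fun k => ¬ 4 ≤ k), ((k : ℤ) - 3) * (V k : ℤ) = 0 := by
      apply Finset.sum_eq_zero
      intro k hk
      have h3 := hmem k (Finset.mem_filter.mp hk).1
      have h4 := (Finset.mem_filter.mp hk).2
      have : k = 3 := by omega
      subst this; norm_num
    rw [this, add_zero]
  have e1 : (f : ℤ) = 6 + ((V 4 : ℤ) + (Q - 3 * P)) := by
    rw [h1, e0, split_sum_at_four s (fun k => ((k : ℤ) - 3) * (V k : ℤ))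
        (fun h => by simp [hV4 h])]
    have : ∑ k ∈ t, ((k : ℤ) - 3) * (V k : ℤ)
        = Q - 3 * P := by
      rw [hQ, hP, Finset.mul_sum, ← Finset.sum_sub_distrib]
      exact Finset.sum_congr rfl fun k _ => by ring
    rw [this]; push_cast; ring
  have e2 : 3 * (f : ℤ) ≤ 4 * (V 4 : ℤ) + Q := by
    calc 3 * (f : ℤ) ≤ ∑ k ∈ s.filter (fun k => 4 ≤ k), (k : ℤ) * (V k : ℤ) := h2
    _ = (4 : ℤ) * (V 4 : ℤ) + Q := by
        rw [split_sum_at_four s (fun k => (k : ℤ) * (V k : ℤ)) (fun h => by simp [hV4 h]), hQ]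
        norm_num
        rfl
  have key : (18 : ℤ) + P ≤ (V 4 : ℤ) := by linarith
  have h18 : (18 : ℤ) ≤ (V 4 : ℤ) := by linarith
  refine ⟨by exact_mod_cast h18, ?_, by linarith, ?_⟩
  · have : (24 : ℤ) ≤ (f : ℤ) := by linarith
    exact_mod_cast this
  · intro hf24 k hk5
    have hf : (f : ℤ) = 24 := by exact_mod_cast congrArg Nat.cast hf24
    have hP0 : P = 0 := le_antisymm (by linarith) hPnn
    by_contra hne
    have hks : k ∈ t := Finset.mem_filter.mpr ⟨Finsupp.mem_support_iff.mpr hne, hk5⟩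
    have hle : (V k : ℤ) ≤ P :=
      Finset.single_le_sum (f := fun i => (V i : ℤ)) (fun i _ => by positivity) hks
    have : (1 : ℤ) ≤ (V k : ℤ) := by
      exact_mod_cast Nat.one_le_iff_ne_zero.mpr hne
    linarith
end

section
/- Let f be a natural number and let V : ℕ → ℕ be a finitely supported function with V k = 0 for all k < 3. Assume (as integers) V 3 = 8 + ∑_{k ≥ 4} (k − 4)·(V k) and f ≥ 2·(V 3). Then (f : ℤ) ≥ 16 + ∑_{k ≥ 5} 2·(k − 4)·(V k); in particular f ≥ 16, and if f = 16 then V k = 0 for all k ≥ 5. -/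
/-!
Since the `k = 4` term of the vertex identity vanishes, doubling it gives
`2 V₃ = 16 + ∑_{k ≥ 5} 2 (k - 4) V_k`, a sum of nonnegative terms that are positive
exactly where `V_k ≠ 0`; then `f ≥ 2 V₃` does the rest.
-/

open Finset

lemma sum_filter_four_le_sub_four_mul (s : Finset ℕ) (g : ℕ → ℤ) :
    ∑ k ∈ s.filter (4 ≤ ·), ((k : ℤ) - 4) * g k =
      ∑ k ∈ s.filter (5 ≤ ·), ((k : ℤ) - 4) * g k := by
  rw [sum_filter, sum_filter]
  refine sum_congr rfl fun k _ => ?_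
  split_ifs with h4 h5 h5
  · rfl
  · obtain rfl : k = 4 := by omega
    simp
  · omega
  · rfl

lemma two_mul_sub_four_mul_nonneg {k : ℕ} (hk : 4 ≤ k) (n : ℕ) :
    0 ≤ 2 * ((k : ℤ) - 4) * n := by
  have : (4 : ℤ) ≤ k := by exact_mod_cast hk
  have : (0 : ℤ) ≤ n := n.cast_nonneg
  nlinarith

lemma sum_filter_five_le_two_mul_sub_four_mul_nonneg (s : Finset ℕ) (v : ℕ → ℕ) :
    0 ≤ ∑ k ∈ s.filter (5 ≤ ·), 2 * ((k : ℤ) - 4) * v k :=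
  sum_nonneg fun k hk => two_mul_sub_four_mul_nonneg (by grind) _

lemma eq_zero_of_sum_filter_five_le_two_mul_sub_four_mul_eq_zero {s : Finset ℕ} {v : ℕ → ℕ}
    (h : ∑ k ∈ s.filter (5 ≤ ·), 2 * ((k : ℤ) - 4) * v k = 0)
    {k : ℕ} (hk : k ∈ s) (h5 : 5 ≤ k) : v k = 0 := by
  have hterms := (sum_eq_zero_iff_of_nonneg fun j hj =>
    two_mul_sub_four_mul_nonneg (by grind) _).1 h k (mem_filter.2 ⟨hk, h5⟩)
  have : (k : ℤ) - 4 ≠ 0 := by omega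
  simpa [this] using hterms

theorem stmt_5_general (f : ℕ) (V : ℕ →₀ ℕ)
    (h1 : (V 3 : ℤ) = 8 + ∑ k ∈ V.support.filter (fun k => 4 ≤ k), ((k : ℤ) - 4) * (V k : ℤ))
    (h2 : 2 * V 3 ≤ f) :
    16 + ∑ k ∈ V.support.filter (fun k => 5 ≤ k), 2 * ((k : ℤ) - 4) * (V k : ℤ) ≤ (f : ℤ) ∧
    16 ≤ f ∧ (f = 16 → ∀ k, 5 ≤ k → V k = 0) := by
  set S := ∑ k ∈ V.support.filter (fun k => 5 ≤ k), 2 * ((k : ℤ) - 4) * (V k : ℤ) with hS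
  have hV3 : 2 * (V 3 : ℤ) = 16 + S := by
    rw [h1, sum_filter_four_le_sub_four_mul, hS, mul_add, mul_sum]
    simp only [mul_assoc]
    norm_num
  have hS_nonneg : 0 ≤ S := sum_filter_five_le_two_mul_sub_four_mul_nonneg _ _
  have hf : 16 + S ≤ (f : ℤ) := by omega
  refine ⟨hf, by omega, fun hf16 k h5 => ?_⟩
  by_contra hVk
  exact hVk (eq_zero_of_sum_filter_five_le_two_mul_sub_four_mul_eq_zero (by omega)
    (Finsupp.mem_support_iff.2 hVk) h5)

/-- Arithmetic core of Lemma 3.11: if `V 3 = 8 + ∑_{k ≥ 4} (k-4) V k` and `f ≥ 2 V 3`,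
then `f ≥ 16 + ∑_{k ≥ 5} 2(k-4) V k`, hence `f ≥ 16`, and `f = 16` forces no vertices
of degree `≥ 5`. -/
theorem stmt_5 (f : ℕ) (V : ℕ →₀ ℕ) (hV : ∀ k < 3, V k = 0)
    (h1 : (V 3 : ℤ) = 8 + ∑ k ∈ V.support.filter (fun k => 4 ≤ k), ((k : ℤ) - 4) * (V k : ℤ))
    (h2 : 2 * V 3 ≤ f) :
    16 + ∑ k ∈ V.support.filter (fun k => 5 ≤ k), 2 * ((k : ℤ) - 4) * (V k : ℤ) ≤ (f : ℤ) ∧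
    16 ≤ f ∧ (f = 16 → ∀ k, 5 ≤ k → V k = 0) :=
  stmt_5_general f V h1 h2
end

section
/- Let α, β, γ, δ, a, b be real numbers. If Y(a)·Z(π−α)·Y(a)·Z(π−β)·Y(a)·Z(π−γ)·Y(b)·Z(π−δ) equals the 3×3 identity matrix and sin a ≠ 0, then (1 − cos α)·sin δ·cos a = sin α·cos δ + sin γ, and (1 − cos β)·sin γ·cos a = sin β·cos γ + sin δ. -/
/-!
`Y(b)` fixes `e₂` and every `Z(θ)` fixes `e₃`. Cut the closed path into an identity
`M = N⁻¹` in which `Y(b)` is the last factor of `M` and `Z(π - β)⁻¹` the first factor of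
`N⁻¹`; then the `(e₃, e₂)` entry of this identity involves neither `b` nor `β`, and it is
`sin a` times equality (7). Cutting instead with `Y(b)` first in `M` and `Z(π - α)⁻¹` last in
`N⁻¹`, the `(e₂, e₃)` entry gives `sin a` times equality (8).
-/

open Real

/-- Rotation about the `y`-axis by angle `t`. -/
noncomputable def Yrot (t : ℝ) : Matrix (Fin 3) (Fin 3) ℝ :=
  !![Real.cos t, 0, Real.sin t; 0, 1, 0; -Real.sin t, 0, Real.cos t]

/-- Rotation about the `z`-axis by angle `t`. -/
noncomputable def Zrot (t : ℝ) : Matrix (Fin 3) (Fin 3) ℝ :=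
  !![Real.cos t, -Real.sin t, 0; Real.sin t, Real.cos t, 0; 0, 0, 1]

lemma Yrot_add (s t : ℝ) : Yrot (s + t) = Yrot s * Yrot t := by
  simp only [Yrot, Matrix.mul_fin_three, cos_add, sin_add]
  ring_nf

lemma Zrot_add (s t : ℝ) : Zrot (s + t) = Zrot s * Zrot t := by
  simp only [Zrot, Matrix.mul_fin_three, cos_add, sin_add]
  ring_nf

lemma Yrot_zero : Yrot 0 = 1 := by
  simp [Yrot, Matrix.one_fin_three]

lemma Zrot_zero : Zrot 0 = 1 := by
  simp [Zrot, Matrix.one_fin_three]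

lemma Zrot_mul_Zrot_neg (t : ℝ) : Zrot t * Zrot (-t) = 1 := by
  rw [← Zrot_add, add_neg_cancel, Zrot_zero]

lemma Yrot_mul_Yrot_neg_cancel_left (t : ℝ) (M : Matrix (Fin 3) (Fin 3) ℝ) :
    Yrot t * (Yrot (-t) * M) = M := by
  rw [← mul_assoc, ← Yrot_add, add_neg_cancel, Yrot_zero, one_mul]

lemma Zrot_mul_Zrot_neg_cancel_left (t : ℝ) (M : Matrix (Fin 3) (Fin 3) ℝ) :
    Zrot t * (Zrot (-t) * M) = M := by
  rw [← mul_assoc, Zrot_mul_Zrot_neg, one_mul]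

noncomputable def almostEquilateralLoop (α β γ δ a b : ℝ) : Matrix (Fin 3) (Fin 3) ℝ :=
  Yrot a * Zrot (π - α) * Yrot a * Zrot (π - β) * Yrot a * Zrot (π - γ) *
    Yrot b * Zrot (π - δ)

lemma coolsaet_seven_of_loop_eq_one {α β γ δ a b : ℝ}
    (h : almostEquilateralLoop α β γ δ a b = 1) (ha : sin a ≠ 0) :
    (1 - cos α) * sin δ * cos a = sin α * cos δ + sin γ := by
  have hsplit : Yrot a * Zrot (π - α) * Yrot a * Zrot (π - β) *
      (Yrot a * Zrot (π - γ) * Yrot b * Zrot (π - δ)) = 1 := by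
    simpa only [almostEquilateralLoop, mul_assoc] using h
  have hrot : Yrot a * Zrot (π - γ) * Yrot b *
      (Zrot (π - δ) * Yrot a * Zrot (π - α) * Yrot a * Zrot (π - β)) = 1 := by
    simpa only [mul_assoc] using mul_eq_one_comm.mp hsplit
  have hinv : Zrot (π - δ) * Yrot a * Zrot (π - α) * Yrot a * Zrot (π - β) *
      (Zrot (-(π - β)) * Yrot (-a) * Zrot (-(π - α)) * Yrot (-a) * Zrot (-(π - δ))) = 1 := by
    simp only [mul_assoc, Yrot_mul_Yrot_neg_cancel_left, Zrot_mul_Zrot_neg_cancel_left,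
      Zrot_mul_Zrot_neg]
  have hmat : Yrot a * Zrot (π - γ) * Yrot b =
      Zrot (-(π - β)) * Yrot (-a) * Zrot (-(π - α)) * Yrot (-a) * Zrot (-(π - δ)) :=
    left_inv_eq_right_inv hrot hinv
  have hentry := congrFun₂ hmat 2 1
  simp only [Yrot, Zrot, Matrix.mul_fin_three, Matrix.of_apply, Matrix.cons_val',
    Matrix.cons_val_zero, Matrix.cons_val_one, Matrix.cons_val_two, Matrix.cons_val_fin_one,
    Matrix.tail_cons, Matrix.vecHead, neg_sub, sin_pi_sub, cos_pi_sub, sin_sub_pi, cos_sub_pi,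
    sin_neg, cos_neg] at hentry
  refine mul_left_cancel₀ ha ?_
  linear_combination -hentry

lemma coolsaet_eight_of_loop_eq_one {α β γ δ a b : ℝ}
    (h : almostEquilateralLoop α β γ δ a b = 1) (ha : sin a ≠ 0) :
    (1 - cos β) * sin γ * cos a = sin β * cos γ + sin δ := by
  have hsplit : Yrot a * Zrot (π - α) * Yrot a * Zrot (π - β) * Yrot a * Zrot (π - γ) *
      (Yrot b * Zrot (π - δ)) = 1 := by
    simpa only [almostEquilateralLoop, mul_assoc] using h
  have hrot : Yrot b * Zrot (π - δ) * Yrot a *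
      (Zrot (π - α) * Yrot a * Zrot (π - β) * Yrot a * Zrot (π - γ)) = 1 := by
    simpa only [mul_assoc] using mul_eq_one_comm.mp hsplit
  have hinv : Zrot (π - α) * Yrot a * Zrot (π - β) * Yrot a * Zrot (π - γ) *
      (Zrot (-(π - γ)) * Yrot (-a) * Zrot (-(π - β)) * Yrot (-a) * Zrot (-(π - α))) = 1 := by
    simp only [mul_assoc, Yrot_mul_Yrot_neg_cancel_left, Zrot_mul_Zrot_neg_cancel_left,
      Zrot_mul_Zrot_neg]
  have hmat : Yrot b * Zrot (π - δ) * Yrot a =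
      Zrot (-(π - γ)) * Yrot (-a) * Zrot (-(π - β)) * Yrot (-a) * Zrot (-(π - α)) :=
    left_inv_eq_right_inv hrot hinv
  have hentry := congrFun₂ hmat 1 2
  simp only [Yrot, Zrot, Matrix.mul_fin_three, Matrix.of_apply, Matrix.cons_val',
    Matrix.cons_val_zero, Matrix.cons_val_one, Matrix.cons_val_two, Matrix.cons_val_fin_one,
    Matrix.tail_cons, Matrix.vecHead, neg_sub, sin_pi_sub, cos_pi_sub, sin_sub_pi, cos_sub_pi,
    sin_neg, cos_neg] at hentry
  refine mul_left_cancel₀ ha ?_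
  linear_combination -hentry

/-- Necessity of Coolsaet's equalities (7) and (8) in Lemma 3.12: the closed-path
rotation identity for an almost equilateral spherical quadrilateral implies the two
equalities, provided `sin a ≠ 0`. -/
theorem stmt_6 (α β γ δ a b : ℝ)
    (h : Yrot a * Zrot (π - α) * Yrot a * Zrot (π - β) * Yrot a * Zrot (π - γ) *
      Yrot b * Zrot (π - δ) = 1)
    (ha : Real.sin a ≠ 0) :
    (1 - Real.cos α) * Real.sin δ * Real.cos a = Real.sin α * Real.cos δ + Real.sin γ ∧
    (1 - Real.cos β) * Real.sin γ * Real.cos a = Real.sin β * Real.cos γ + Real.sin δ :=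
  ⟨coolsaet_seven_of_loop_eq_one h ha, coolsaet_eight_of_loop_eq_one h ha⟩
end

section
/- Let α, β, γ, δ, a be real numbers with sin(α/2) ≠ 0 and sin(β/2) ≠ 0, and suppose sin(α/2)·sin(δ − β/2) = sin(β/2)·sin(γ − α/2), (1 − cos α)·sin δ·cos a = sin α·cos δ + sin γ, and (1 − cos β)·sin γ·cos a = sin β·cos γ + sin δ. Then (sin β·sin γ − sin α·sin δ)·cos a = cos β·cos γ − cos α·cos δ. -/
/-!
Write `s, c` and `t, d` for the sine and cosine of `α/2` and `β/2`. By the double-angle formulas the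
second and third equalities read `2s(s sin δ cos a - c cos δ) = sin γ` and
`2t(t sin γ cos a - d cos γ) = sin δ`, and expanding the first gives
`s d sin δ - t c sin γ = s t (cos δ - cos γ)`. The combination `s d · (third) - t c · (second)`,
corrected by the first, is `s t` times the claimed identity, and `s t ≠ 0`.
-/

open Real

lemma one_sub_cos_eq_two_mul_sin_half_sq (x : ℝ) : 1 - cos x = 2 * sin (x / 2) ^ 2 := by
  rw [sin_sq_eq_half_sub, mul_div_cancel₀ x two_ne_zero]
  ring

lemma sin_eq_two_mul_sin_half_mul_cos_half (x : ℝ) : sin x = 2 * sin (x / 2) * cos (x / 2) := by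
  rw [← sin_two_mul, mul_div_cancel₀ x two_ne_zero]

lemma cos_eq_two_mul_cos_half_sq_sub_one (x : ℝ) : cos x = 2 * cos (x / 2) ^ 2 - 1 := by
  rw [← cos_two_mul, mul_div_cancel₀ x two_ne_zero]

lemma coolsaet_identity_of_half_angles {R : Type*} [CommRing R] [IsDomain R]
    {s c t d sγ cγ sδ cδ k : R} (hs : s ≠ 0) (ht : t ≠ 0)
    (h1 : s * (sδ * d - cδ * t) = t * (sγ * c - cγ * s))
    (h2 : 2 * s ^ 2 * sδ * k = 2 * s * c * cδ + sγ)
    (h3 : 2 * t ^ 2 * sγ * k = 2 * t * d * cγ + sδ) :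
    (2 * t * d * sγ - 2 * s * c * sδ) * k = (2 * d ^ 2 - 1) * cγ - (2 * c ^ 2 - 1) * cδ := by
  refine mul_left_cancel₀ (mul_ne_zero hs ht) ?_
  linear_combination s * d * h3 - t * c * h2 + h1

/-- Identity (19) in the proof of Lemma 3.12: Coolsaet's three equalities imply
`(sin β sin γ - sin α sin δ) cos a = cos β cos γ - cos α cos δ`. -/
theorem stmt_9 (α β γ δ a : ℝ)
    (hα : Real.sin (α / 2) ≠ 0) (hβ : Real.sin (β / 2) ≠ 0)
    (h1 : Real.sin (α / 2) * Real.sin (δ - β / 2) =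
      Real.sin (β / 2) * Real.sin (γ - α / 2))
    (h2 : (1 - Real.cos α) * Real.sin δ * Real.cos a = Real.sin α * Real.cos δ + Real.sin γ)
    (h3 : (1 - Real.cos β) * Real.sin γ * Real.cos a = Real.sin β * Real.cos γ + Real.sin δ) :
    (Real.sin β * Real.sin γ - Real.sin α * Real.sin δ) * Real.cos a =
      Real.cos β * Real.cos γ - Real.cos α * Real.cos δ := by
  simp only [one_sub_cos_eq_two_mul_sin_half_sq, sin_eq_two_mul_sin_half_mul_cos_half α,
    sin_eq_two_mul_sin_half_mul_cos_half β] at h2 h3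
  rw [sin_sub, sin_sub] at h1
  rw [sin_eq_two_mul_sin_half_mul_cos_half α, sin_eq_two_mul_sin_half_mul_cos_half β,
    cos_eq_two_mul_cos_half_sq_sub_one α, cos_eq_two_mul_cos_half_sq_sub_one β]
  exact coolsaet_identity_of_half_angles hα hβ h1 h2 h3
end

section
/- Let α, β, γ, δ be real numbers with 0 < α < 2π, 0 < β < 2π, 0 < γ ≤ π, 0 < δ ≤ π, and suppose sin(α/2)·sin(δ − β/2) = sin(β/2)·sin(γ − α/2). Then α < 2γ if and only if β < 2δ. -/
open Real

/-!
Both `sin (α / 2)` and `sin (β / 2)` are positive, so Coolsaet's equality forces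
`sin (δ - β / 2)` and `sin (γ - α / 2)` to have the same sign. The angles `γ - α / 2` and
`δ - β / 2` lie in `(-π, π)`, where the sign of `sin` is the sign of its argument.
-/

lemma Real.sin_pos_iff_of_neg_pi_lt_of_lt_pi {x : ℝ} (h₁ : -π < x) (h₂ : x < π) :
    0 < sin x ↔ 0 < x := by
  refine ⟨fun hsin => ?_, fun hx => sin_pos_of_pos_of_lt_pi hx h₂⟩
  by_contra! hx
  linarith [sin_nonpos_of_nonpos_of_neg_pi_le hx h₁.le]

lemma Real.sin_sub_half_pos_iff {a c : ℝ} (ha₀ : 0 < a) (ha : a < 2 * π) (hc₀ : 0 < c)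
    (hc : c ≤ π) : 0 < sin (c - a / 2) ↔ a < 2 * c := by
  rw [sin_pos_iff_of_neg_pi_lt_of_lt_pi (by linarith) (by linarith)]
  constructor <;> intro <;> linarith

lemma Real.sin_half_pos {a : ℝ} (ha₀ : 0 < a) (ha : a < 2 * π) : 0 < sin (a / 2) :=
  sin_pos_of_pos_of_lt_pi (by linarith) (by linarith)

lemma pos_iff_pos_of_mul_eq_mul {α : Type*} [MulZeroClass α] [Preorder α] [PosMulStrictMono α]
    [PosMulReflectLT α] {a b x y : α} (ha : 0 < a) (hb : 0 < b)
    (h : a * y = b * x) : 0 < x ↔ 0 < y := by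
  rw [← mul_pos_iff_of_pos_left hb, ← h, mul_pos_iff_of_pos_left ha]

/-- Trigonometric content of Lemma 3.20: if the angles lie in `(0,2π)` with
`γ, δ ≤ π` and Coolsaet's equality holds, then `α < 2γ ↔ β < 2δ`. -/
theorem stmt_10 (α β γ δ : ℝ)
    (hα1 : 0 < α) (hα2 : α < 2 * π) (hβ1 : 0 < β) (hβ2 : β < 2 * π)
    (hγ1 : 0 < γ) (hγ2 : γ ≤ π) (hδ1 : 0 < δ) (hδ2 : δ ≤ π)
    (h : Real.sin (α / 2) * Real.sin (δ - β / 2) =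
      Real.sin (β / 2) * Real.sin (γ - α / 2)) :
    α < 2 * γ ↔ β < 2 * δ := by
  rw [← sin_sub_half_pos_iff hα1 hα2 hγ1 hγ2, ← sin_sub_half_pos_iff hβ1 hβ2 hδ1 hδ2]
  exact pos_iff_pos_of_mul_eq_mul (sin_half_pos hα1 hα2) (sin_half_pos hβ1 hβ2) h
end

section
/- If β is a real number with 0 < β < π and sin(π/3)·sin(π − (3/2)·β) = sin(β/2)·sin(π/6), then cos β = (1 − √3)/(2·√3). -/
open Real

/-! With `s = sin (β / 2)`, the triple-angle formula turns the equation into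
`(√3 / 2) (3 s - 4 s³) = s / 2`; dividing by `s > 0` gives `√3 (3 - 4 s²) = 1`,
and `cos β = 1 - 2 s²` then has the stated value. -/

lemma sin_sq_eq_of_sin_pi_div_three_mul_sin_three_mul {x : ℝ} (hx : sin x ≠ 0)
    (h : sin (π / 3) * sin (3 * x) = sin x * sin (π / 6)) :
    √3 * (3 - 4 * sin x ^ 2) = 1 := by
  rw [sin_three_mul, sin_pi_div_three, sin_pi_div_six] at h
  apply mul_left_cancel₀ hx
  linear_combination 2 * h

lemma cos_two_mul_eq_of_sin_pi_div_three_mul_sin_three_mul {x : ℝ} (hx : sin x ≠ 0)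
    (h : sin (π / 3) * sin (3 * x) = sin x * sin (π / 6)) :
    cos (2 * x) = (1 - √3) / (2 * √3) := by
  have hsin := sin_sq_eq_of_sin_pi_div_three_mul_sin_three_mul hx h
  rw [cos_two_mul_eq_one_sub, eq_div_iff (by positivity)]
  linear_combination hsin

/-- The trigonometric equation of Proposition 7.12 (vertices `α³, γ⁴, β²δ²`, `f = 24`)
determines `cos β = (1 - √3)/(2√3)`. -/
theorem stmt_11 (β : ℝ) (h1 : 0 < β) (h2 : β < π)
    (h : Real.sin (π / 3) * Real.sin (π - 3 / 2 * β) =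
      Real.sin (β / 2) * Real.sin (π / 6)) :
    Real.cos β = (1 - Real.sqrt 3) / (2 * Real.sqrt 3) := by
  have hsin : sin (β / 2) ≠ 0 := (sin_pos_of_pos_of_lt_pi (by linarith) (by linarith)).ne'
  rw [sin_pi_sub, show 3 / 2 * β = 3 * (β / 2) by ring] at h
  simpa [mul_div_cancel₀] using cos_two_mul_eq_of_sin_pi_div_three_mul_sin_three_mul hsin h
end

section
/- If δ is a real number with 2π/3 < δ < π and sin(π − δ)·sin(δ − π/3) = sin(π/3)·sin(2δ − 4π/3), then 8·(cos δ)² = 5 and tan δ = −√15/5. -/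
open Real

/-! Expanding both sides, the `sin δ cos δ` terms cancel and the equality becomes
`5 sin² δ = 3 cos² δ`, i.e. `8 cos² δ = 5`. For `δ` in the second quadrant `tan δ < 0`, and
`tan² δ = 1 / cos² δ - 1 = 3/5` fixes it. -/

lemma coolsaet_sub_eq (δ : ℝ) :
    sin (π - δ) * sin (δ - π / 3) - sin (π / 3) * sin (2 * δ - 4 * π / 3) =
      (5 - 8 * cos δ ^ 2) / 4 := by
  have h4 : 4 * π / 3 = π / 3 + π := by ring
  rw [sin_pi_sub, sin_sub, sin_sub, h4, sin_add_pi, cos_add_pi, sin_two_mul, cos_two_mul,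
    sin_pi_div_three, cos_pi_div_three]
  have h3 : √3 ^ 2 = 3 := sq_sqrt (by norm_num)
  linear_combination (1 - 2 * cos δ ^ 2) * h3 / 4 + sin_sq_add_cos_sq δ / 2

lemma tan_neg_of_pi_div_two_lt_of_lt {x : ℝ} (h1 : π / 2 < x) (h2 : x < π) : tan x < 0 := by
  have : 0 < tan (π - x) := tan_pos_of_pos_of_lt_pi_div_two (by linarith) (by linarith)
  rwa [tan_pi_sub, neg_pos] at this

/-- Coolsaet's equality for the `f = 12` earth map tiling (Proposition 7.6):
the solution with `2π/3 < δ < π` satisfies `8 cos² δ = 5` and `tan δ = -√15/5`. -/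
theorem stmt_12 (δ : ℝ) (h1 : 2 * π / 3 < δ) (h2 : δ < π)
    (h : Real.sin (π - δ) * Real.sin (δ - π / 3) =
      Real.sin (π / 3) * Real.sin (2 * δ - 4 * π / 3)) :
    8 * Real.cos δ ^ 2 = 5 ∧ Real.tan δ = -Real.sqrt 15 / 5 := by
  have hπ : π / 2 < δ := by linarith [pi_pos]
  have hcos : 8 * cos δ ^ 2 = 5 := by linarith [coolsaet_sub_eq δ, sub_eq_zero.2 h]
  refine ⟨hcos, ?_⟩
  have htan_sq : tan δ ^ 2 = 3 / 5 := by
    have := inv_one_add_tan_sq (cos_neg_of_pi_div_two_lt_of_lt hπ (by linarith)).ne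
    field_simp at this
    linear_combination (-8 / 5) * this - (1 + tan δ ^ 2) / 5 * hcos
  have htan := tan_neg_of_pi_div_two_lt_of_lt hπ h2
  have h15 : √15 ^ 2 = 15 := sq_sqrt (by norm_num)
  have : -tan δ = √15 / 5 :=
    (sq_eq_sq₀ (by linarith) (by positivity)).1 (by rw [neg_sq, div_pow, h15, htan_sq]; norm_num)
  linarith
end

section
/- If δ is a real number with 3π/4 < δ < π and sin(π − δ)·sin(δ − π/4) = sin(π/4)·sin(2δ − 5π/4), then (1 + √2)·(tan δ)² + (2 − √2)·tan δ − 1 = 0 and tan δ = 2 − √5 − √(7 − 3·√5). -/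
/-!
Expanding both sides with the addition formulas and `sin (π/4) = cos (π/4) = √2/2`, Coolsaet's
equality becomes the homogeneous quadratic `(1 + √2) sin² δ + (2 - √2) sin δ cos δ - cos² δ = 0`;
dividing by `cos² δ` gives the quadratic for `tan δ`. Its roots have product `1 - √2 < 0`, so
exactly one is negative, and `tan δ < 0` on `(π/2, π)` selects it.
-/

open Real

theorem sin_pi_sub_mul_sin_sub_pi_div_four_eq_iff (δ : ℝ) :
    sin (π - δ) * sin (δ - π / 4) = sin (π / 4) * sin (2 * δ - 5 * π / 4) ↔
      (1 + √2) * sin δ ^ 2 + (2 - √2) * (sin δ * cos δ) - cos δ ^ 2 = 0 := by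
  have h2 : √2 ^ 2 = 2 := sq_sqrt zero_le_two
  have hsin : sin (5 * π / 4) = -(√2 / 2) := by
    rw [show 5 * π / 4 = π / 4 + π by ring, sin_add_pi, sin_pi_div_four]
  have hcos : cos (5 * π / 4) = -(√2 / 2) := by
    rw [show 5 * π / 4 = π / 4 + π by ring, cos_add_pi, cos_pi_div_four]
  rw [sin_pi_sub, sin_sub, sin_sub, hsin, hcos, sin_two_mul, cos_two_mul, cos_pi_div_four,
    sin_pi_div_four]
  have hpyth := sin_sq_add_cos_sq δ
  set Y := 2 * cos δ ^ 2 - 1 - 2 * sin δ * cos δ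
  constructor <;> intro h
  · linear_combination 2 * h + (Y / 2) * h2 + hpyth
  · linear_combination h / 2 - (Y / 4) * h2 - hpyth / 2

theorem quadratic_tan_eq_zero_of_homogeneous {a b c x : ℝ} (hx : cos x ≠ 0)
    (h : a * sin x ^ 2 + b * (sin x * cos x) + c * cos x ^ 2 = 0) :
    a * tan x ^ 2 + b * tan x + c = 0 := by
  rw [tan_eq_sin_div_cos]
  field_simp
  linear_combination h

theorem eq_of_quadratic_eq_zero_of_neg {a b c t r : ℝ} (ha : 0 < a) (hc : c < 0)
    (ht : a * t ^ 2 + b * t + c = 0) (hr : a * r ^ 2 + b * r + c = 0)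
    (ht0 : t < 0) (hr0 : r < 0) : t = r := by
  by_contra hne
  have hsum : a * (t + r) + b = 0 := by
    have : (t - r) * (a * (t + r) + b) = 0 := by linear_combination ht - hr
    exact (mul_eq_zero.mp this).resolve_left (sub_ne_zero.mpr hne)
  have hprod : a * (t * r) = c := by linear_combination -ht + t * hsum
  nlinarith [mul_pos (mul_pos_of_neg_of_neg ht0 hr0) ha]

theorem sqrt_five_lt_three : √5 < 3 := by
  rw [sqrt_lt' three_pos]; norm_num

theorem sqrt_seven_sub_three_mul_sqrt_five : √(7 - 3 * √5) = √2 * (3 - √5) / 2 := by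
  have h2 : √2 ^ 2 = 2 := sq_sqrt zero_le_two
  have h5 : √5 ^ 2 = 5 := sq_sqrt (by norm_num)
  rw [show 7 - 3 * √5 = (√2 * (3 - √5) / 2) ^ 2 by
    linear_combination (-(3 - √5) ^ 2 / 4) * h2 - h5 / 2]
  exact sqrt_sq (by have := sqrt_five_lt_three; positivity)

-- `(√2 - 2 - √10) / (2 (1 + √2))` by the quadratic formula, with the denominator rationalized.
noncomputable def negRoot : ℝ := 2 - √5 - √2 * (3 - √5) / 2

theorem quadratic_eq_zero_negRoot : (1 + √2) * negRoot ^ 2 + (2 - √2) * negRoot + -1 = 0 := by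
  have h2 : √2 ^ 2 = 2 := sq_sqrt zero_le_two
  have h5 : √5 ^ 2 = 5 := sq_sqrt (by norm_num)
  unfold negRoot
  linear_combination
    ((1 + √2) * ((√5 - 3) / 2) ^ 2 + (2 - √5) * (√5 - 3) - (√5 - 3) / 2) * h2
      + ((√2 - 1) / 2) * h5

theorem negRoot_neg : negRoot < 0 := by
  have h5 : 2 < √5 := by rw [lt_sqrt zero_le_two]; norm_num
  have : 0 < √2 * (3 - √5) / 2 := by
    have := sqrt_five_lt_three
    have : 0 < √2 := by positivity
    positivity
  unfold negRoot
  linarith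

/-- Coolsaet's equality for the `f = 16` earth map tiling (Proposition 7.15):
the solution with `3π/4 < δ < π` satisfies `(1+√2) tan² δ + (2-√2) tan δ - 1 = 0`
and `tan δ = 2 - √5 - √(7 - 3√5)`. -/
theorem stmt_13 (δ : ℝ) (h1 : 3 * π / 4 < δ) (h2 : δ < π)
    (h : Real.sin (π - δ) * Real.sin (δ - π / 4) =
      Real.sin (π / 4) * Real.sin (2 * δ - 5 * π / 4)) :
    (1 + Real.sqrt 2) * Real.tan δ ^ 2 + (2 - Real.sqrt 2) * Real.tan δ - 1 = 0 ∧
    Real.tan δ = 2 - Real.sqrt 5 - Real.sqrt (7 - 3 * Real.sqrt 5) := by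
  have hcos : cos δ < 0 := cos_neg_of_pi_div_two_lt_of_lt (by linarith) (by linarith)
  have hquad : (1 + √2) * tan δ ^ 2 + (2 - √2) * tan δ + -1 = 0 :=
    quadratic_tan_eq_zero_of_homogeneous hcos.ne <| by
      linear_combination (sin_pi_sub_mul_sin_sub_pi_div_four_eq_iff δ).mp h
  have htan : tan δ < 0 := by
    rw [← tan_sub_pi]
    exact tan_neg_of_neg_of_pi_div_two_lt (by linarith) (by linarith)
  refine ⟨by linear_combination hquad, ?_⟩
  rw [sqrt_seven_sub_three_mul_sqrt_five]
  exact eq_of_quadratic_eq_zero_of_neg (by positivity) neg_one_lt_zero hquad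
    quadratic_eq_zero_negRoot htan negRoot_neg
end

section
/- If γ is a real number with 0 < γ < π/2 and sin(π/4)·sin(5π/8 − γ) = sin(3π/8)·sin(γ − π/4), then tan γ = 2 + √2. -/
/-!
Write `b = β/2`. With `α = π/2` and `δ = π - γ`, Coolsaet's equality expands to the linear relation
`2 sin b cos γ = (sin b - cos b) sin γ`; multiplying it by `sin b + cos b` expresses it through
`β = 2b` as `(1 - cos β + sin β) cos γ = -cos β sin γ`. For `β = 3π/4` this reads
`(1 + √2) cos γ = (√2/2) sin γ`, i.e. `sin γ = (2 + √2) cos γ`; as `sin γ` and `cos γ` cannot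
vanish together, `tan γ = 2 + √2`.
-/

open Real

theorem tan_eq_of_sin_eq_mul_cos {x k : ℝ} (h : sin x = k * cos x) : tan x = k := by
  have hcos : cos x ≠ 0 := fun hc => by
    have := sin_sq_add_cos_sq x
    simp_all
  rw [tan_eq_sin_div_cos, h, mul_div_cancel_right₀ _ hcos]

theorem coolsaet_right_angle {β γ : ℝ}
    (h : sin (π / 4) * sin (π - γ - β / 2) = sin (β / 2) * sin (γ - π / 4)) :
    (1 - cos β + sin β) * cos γ = -cos β * sin γ := by
  obtain ⟨b, rfl⟩ : ∃ b, β = 2 * b := ⟨β / 2, by ring⟩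
  rw [mul_div_cancel_left₀ b two_ne_zero, show π - γ - b = π - (γ + b) by ring, sin_pi_sub,
    sin_add, sin_sub, sin_pi_div_four, cos_pi_div_four] at h
  have hb : sin γ * cos b + cos γ * sin b = sin b * (sin γ - cos γ) := by
    refine mul_left_cancel₀ (by positivity : √2 / 2 ≠ 0) ?_
    linear_combination h
  rw [cos_two_mul, sin_two_mul]
  linear_combination (sin b + cos b) * hb + (sin γ - 2 * cos γ) * sin_sq_add_cos_sq b

theorem stmt_14_general (γ : ℝ)
    (h : Real.sin (π / 4) * Real.sin (5 * π / 8 - γ) =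
      Real.sin (3 * π / 8) * Real.sin (γ - π / 4)) :
    Real.tan γ = 2 + Real.sqrt 2 := by
  have hβ : sin (π / 4) * sin (π - γ - 3 * π / 4 / 2) = sin (3 * π / 4 / 2) * sin (γ - π / 4) := by
    rwa [show π - γ - 3 * π / 4 / 2 = 5 * π / 8 - γ by ring, show 3 * π / 4 / 2 = 3 * π / 8 by ring]
  have hγ := coolsaet_right_angle hβ
  rw [show 3 * π / 4 = π - π / 4 by ring, cos_pi_sub, sin_pi_sub, cos_pi_div_four,
    sin_pi_div_four] at hγ
  apply tan_eq_of_sin_eq_mul_cos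
  refine mul_left_cancel₀ (by positivity : √2 / 2 ≠ 0) ?_
  linear_combination -hγ - cos γ / 2 * sq_sqrt (zero_le_two : (0 : ℝ) ≤ 2)

/-- Coolsaet's equality for the tiling `S₁₆4` (Proposition 7.13): the solution with
`0 < γ < π/2` satisfies `tan γ = 2 + √2`. -/
theorem stmt_14 (γ : ℝ) (h1 : 0 < γ) (h2 : γ < π / 2)
    (h : Real.sin (π / 4) * Real.sin (5 * π / 8 - γ) =
      Real.sin (3 * π / 8) * Real.sin (γ - π / 4)) :
    Real.tan γ = 2 + Real.sqrt 2 :=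
  stmt_14_general γ h
end

section
/- If β is a real number with 0 < β < π and sin(π/4)·sin(π − (3/2)·β) = sin(β/2), then cos β = (√2 − 1)/2. -/
/-! With `x = β / 2` the equation reads `sin (π/4) · sin (3x) = sin x`. Expanding
`sin (3x) = 3 sin x - 4 sin³ x` and dividing by `sin x ≠ 0` leaves `3 - 4 sin² x = √2`,
and then `cos β = 1 - 2 sin² x = (√2 - 1)/2`. -/

open Real

lemma sin_sq_of_sin_pi_div_four_mul_sin_three_mul {x : ℝ} (hx : sin x ≠ 0)
    (h : sin (π / 4) * sin (3 * x) = sin x) : sin x ^ 2 = (3 - √2) / 4 := by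
  rw [sin_pi_div_four, sin_three_mul] at h
  have hcubic : sin x * (√2 * (3 - 4 * sin x ^ 2) - 2) = 0 := by linear_combination 2 * h
  have hquad : √2 * (3 - 4 * sin x ^ 2) = 2 := by
    linarith [(mul_eq_zero.mp hcubic).resolve_left hx]
  have hsqrt : √2 * √2 = 2 := mul_self_sqrt zero_le_two
  linear_combination (-(√2) * hquad + (3 - 4 * sin x ^ 2) * hsqrt) / 8

/-- Coolsaet's equality for the tiling `S₁₆2` (Proposition 7.14): the solution with
`0 < β < π` satisfies `cos β = (√2 - 1)/2`. -/
theorem stmt_15 (β : ℝ) (h1 : 0 < β) (h2 : β < π)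
    (h : Real.sin (π / 4) * Real.sin (π - 3 / 2 * β) = Real.sin (β / 2)) :
    Real.cos β = (Real.sqrt 2 - 1) / 2 := by
  have hsin : sin (β / 2) ≠ 0 := (sin_pos_of_pos_of_lt_pi (by linarith) (by linarith)).ne'
  rw [sin_pi_sub, show 3 / 2 * β = 3 * (β / 2) by ring] at h
  have hsq := sin_sq_of_sin_pi_div_four_mul_sin_three_mul hsin h
  rw [show β = 2 * (β / 2) by ring, cos_two_mul_eq_one_sub, hsq]
  ring
end

section
/- The real number (4/√3)·sin(2π/9) − √3·tan(π/9) is a root of the cubic polynomial 3t³ + 27t² − 3t − 19, and it is the unique positive real root of this polynomial. -/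
open Real

/-- `(4/√3) sin(2π/9) - √3 tan(π/9)` is the unique positive real root of
`3t³ + 27t² - 3t - 19` (edge length of the quadrilateral of the tiling `S₃₆5`,
Proposition 7.13). -/
theorem stmt_17 :
    0 < 4 / Real.sqrt 3 * Real.sin (2 * π / 9) - Real.sqrt 3 * Real.tan (π / 9) ∧
    3 * (4 / Real.sqrt 3 * Real.sin (2 * π / 9) - Real.sqrt 3 * Real.tan (π / 9)) ^ 3 +
      27 * (4 / Real.sqrt 3 * Real.sin (2 * π / 9) - Real.sqrt 3 * Real.tan (π / 9)) ^ 2 -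
      3 * (4 / Real.sqrt 3 * Real.sin (2 * π / 9) - Real.sqrt 3 * Real.tan (π / 9)) - 19 = 0 ∧
    ∀ t : ℝ, 0 < t → 3 * t ^ 3 + 27 * t ^ 2 - 3 * t - 19 = 0 →
      t = 4 / Real.sqrt 3 * Real.sin (2 * π / 9) - Real.sqrt 3 * Real.tan (π / 9) := by
  set s := Real.sin (π / 9) with hs_def
  set c := Real.cos (π / 9) with hc_def
  have hpi : (0:ℝ) < π := Real.pi_pos
  have hc_pos : 0 < c := by
    apply Real.cos_pos_of_mem_Ioo
    constructor <;> nlinarith [Real.pi_pos]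
  have hs_pos : 0 < s := by
    apply Real.sin_pos_of_pos_of_lt_pi <;> nlinarith [Real.pi_pos]
  have hc_lt1 : c < 1 := by
    have h := Real.cos_lt_cos_of_nonneg_of_le_pi (x := 0) (y := π/9)
      le_rfl (by nlinarith) (by positivity)
    simpa using h
  have hc_gt : 1/2 < c := by
    have h := Real.cos_lt_cos_of_nonneg_of_le_pi (x := π/9) (y := π/3)
      (by positivity) (by nlinarith) (by nlinarith)
    rw [Real.cos_pi_div_three] at h
    exact h
  have hpyth : s^2 + c^2 = 1 := Real.sin_sq_add_cos_sq _
  have hc3 : 4*c^3 - 3*c = 1/2 := by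
    have h := Real.cos_three_mul (π/9)
    have h3 : 3 * (π/9) = π/3 := by ring
    rw [h3, Real.cos_pi_div_three] at h
    linarith [h]
  have hr : Real.sqrt 3 = 6*s - 8*s^3 := by
    have h := Real.sin_three_mul (π/9)
    have h3 : 3 * (π/9) = π/3 := by ring
    rw [h3, Real.sin_pi_div_three] at h
    have h2 : Real.sqrt 3 / 2 = 3*s - 4*s^3 := h
    linarith
  have hr2 : Real.sqrt 3 * Real.sqrt 3 = 3 :=
    Real.mul_self_sqrt (by norm_num)
  have hr_pos : 0 < Real.sqrt 3 := Real.sqrt_pos.mpr (by norm_num)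
  have hsin2 : Real.sin (2 * π / 9) = 2 * s * c := by
    have h : (2:ℝ) * π / 9 = 2 * (π/9) := by ring
    rw [h, Real.sin_two_mul]
  have htan : Real.tan (π / 9) = s / c := Real.tan_eq_sin_div_cos _
  have hb_pos : 0 < 4*c + 1 := by linarith
  have hcne : c ≠ 0 := ne_of_gt hc_pos
  have hbne : (4*c+1) ≠ 0 := ne_of_gt hb_pos
  have hx : 4 / Real.sqrt 3 * Real.sin (2 * π / 9) - Real.sqrt 3 * Real.tan (π / 9)
      = (3*c+1) / (c*(4*c+1)) := by
    rw [hsin2, htan]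
    field_simp
    linear_combination (-(s*(4*c+1))) * hr2 + (-((3*c+1))) * hr
      + (8*s*(3*c+1)) * hpyth + (2*s) * hc3
  rw [hx]
  have hx_pos : 0 < (3*c+1) / (c*(4*c+1)) := by positivity
  set x := (3*c+1) / (c*(4*c+1)) with hxdef
  have hexpand : (3*x^3 + 27*x^2 - 3*x - 19) * (c*(4*c+1))^3
      = 3*(3*c+1)^3 + 27*(3*c+1)^2*(c*(4*c+1)) - 3*(3*c+1)*(c*(4*c+1))^2
        - 19*(c*(4*c+1))^3 := by
    rw [hxdef]; field_simp
  have hnum : 3*(3*c+1)^3 + 27*(3*c+1)^2*(c*(4*c+1)) - 3*(3*c+1)*(c*(4*c+1))^2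
      - 19*(c*(4*c+1))^3 = 0 := by
    linear_combination (2*(-152*c^3 - 132*c^2 - 36*c - 3)) * hc3
  have hcubic : 3*x^3 + 27*x^2 - 3*x - 19 = 0 := by
    have h := hexpand.trans hnum
    rcases mul_eq_zero.mp h with h | h
    · exact h
    · exact absurd h (pow_ne_zero 3 (mul_ne_zero hcne hbne))
  have hx_gt : 1/2 < x := by
    rw [hxdef, lt_div_iff₀ (by positivity)]
    nlinarith
  clear_value x
  refine ⟨hx_pos, by linarith [hcubic], ?_⟩
  intro t ht hroot
  have hfact : (t - x) * (3*t^2 + (27 + 3*x)*t + (3*x^2 + 27*x - 3)) = 0 := by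
    linear_combination hroot - hcubic
  have hQ : 0 < 3*t^2 + (27 + 3*x)*t + (3*x^2 + 27*x - 3) := by
    have h1 : 0 ≤ 3*t^2 := by positivity
    have h2 : 0 < (27 + 3*x)*t := mul_pos (by linarith) ht
    have h3 : 0 < 3*x^2 + 27*x - 3 := by nlinarith [sq_nonneg x]
    linarith
  rcases mul_eq_zero.mp hfact with h | h
  · linarith
  · linarith
end

section
/- For every even integer f ≥ 16, the equality sin(6π/f)·sin((2/3 − 4/f)·π) = sin((1/3 − 2/f)·π)·sin((1/3 − 4/f)·π) holds if and only if f = 36. -/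
open Real

/-- Product-to-sum. -/
lemma stmt18_p2s (a b : ℝ) : sin a * sin b = (cos (a - b) - cos (a + b)) / 2 := by
  rw [cos_sub, cos_add]; ring

/-- The key trigonometric reduction. -/
lemma stmt18_key (t : ℝ) :
    sin (6*t) * sin (2*π/3 - 4*t) - sin (π/3 - 2*t) * sin (π/3 - 4*t)
      = cos (8*t - 2*π/3) * cos (2*t) - (1/2) * cos (2*t + π/3) := by
  have h1 := stmt18_p2s (6*t) (2*π/3 - 4*t)
  have h2 := stmt18_p2s (π/3 - 2*t) (π/3 - 4*t)
  have e1 : (6*t) - (2*π/3 - 4*t) = (8*t - 2*π/3) + 2*t := by ring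
  have e2 : (6*t) + (2*π/3 - 4*t) = (2*t + π/3) + π/3 := by ring
  have e3 : (π/3 - 2*t) - (π/3 - 4*t) = (2*t + π/3) - π/3 := by ring
  have e4 : (π/3 - 2*t) + (π/3 - 4*t) = -((8*t - 2*π/3) - 2*t) := by ring
  rw [h1, h2, e1, e2, e3, e4]
  simp only [cos_neg, cos_add, cos_sub, sin_add, sin_sub, cos_pi_div_three, sin_pi_div_three]
  ring

/-- Equality holds at `t = π/36`. -/
lemma stmt18_base :
    cos (8*(π/36) - 2*π/3) * cos (2*(π/36)) - (1/2) * cos (2*(π/36) + π/3) = 0 := by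
  have h1 : cos (8*(π/36) - 2*π/3) = cos (8*(π/18)) := by
    rw [show 8*(π/36) - 2*π/3 = -(8*(π/18)) by ring, cos_neg]
  have h3 : (2:ℝ)*(π/36) + π/3 = 7*(π/18) := by ring
  have h2 : (2:ℝ)*(π/36) = π/18 := by ring
  have h4 : cos (8*(π/18)) * cos (π/18) = (cos (7*(π/18)) + cos (π/2)) / 2 := by
    rw [show 7*(π/18) = 8*(π/18) - π/18 by ring, show π/2 = 8*(π/18) + π/18 by ring,
        cos_sub, cos_add]
    ring
  rw [h1, h3, h2, h4, cos_pi_div_two]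
  ring

/-- Rewrite the difference using the strictly monotone function `G`. -/
lemma stmt18_factor (t : ℝ) (h : cos (2*t) ≠ 0) :
    cos (8*t - 2*π/3) * cos (2*t) - (1/2) * cos (2*t + π/3)
      = cos (2*t) * ((cos (8*t - 2*π/3) + Real.sqrt 3 / 4 * tan (2*t)) - 1/4) := by
  rw [cos_add, cos_pi_div_three, sin_pi_div_three, tan_eq_sin_div_cos]
  field_simp
  ring_nf
  have h' : cos (t*2) * (cos (t*2))⁻¹ = 1 := mul_inv_cancel₀ (by rwa [mul_comm] at h)
  linear_combination (-(sin (t*2) * √3 * 4)) * h'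

/-- `G` is strictly monotone on `[0, π/16]`. -/
lemma stmt18_mono :
    StrictMonoOn (fun t : ℝ => cos (8*t - 2*π/3) + Real.sqrt 3 / 4 * tan (2*t))
      (Set.Icc 0 (π/16)) := by
  have pp := Real.pi_pos
  have h1 : StrictMonoOn (fun t : ℝ => cos (8*t - 2*π/3)) (Set.Icc 0 (π/16)) := by
    intro x hx y hy hxy
    simp only
    rw [show 8*x - 2*π/3 = -(2*π/3 - 8*x) by ring, cos_neg,
        show 8*y - 2*π/3 = -(2*π/3 - 8*y) by ring, cos_neg]
    apply Real.strictAntiOn_cos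
    · constructor <;> [linarith [hy.1, hy.2]; linarith [hy.1, hy.2]]
    · constructor <;> [linarith [hx.1, hx.2]; linarith [hx.1, hx.2]]
    · linarith
  have h2 : StrictMonoOn (fun t : ℝ => Real.sqrt 3 / 4 * tan (2*t)) (Set.Icc 0 (π/16)) := by
    intro x hx y hy hxy
    simp only
    have hs : (0:ℝ) < Real.sqrt 3 / 4 := by positivity
    have ht : tan (2*x) < tan (2*y) := by
      apply Real.tan_lt_tan_of_nonneg_of_lt_pi_div_two
      · linarith [hx.1]
      · linarith [hy.2]
      · linarith
    exact mul_lt_mul_of_pos_left ht hs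
  exact h1.add h2

/-- For even `f ≥ 16`, Coolsaet's equality for the vertices `αδ², αβ³, γ³δ`
(Proposition 7.15) holds if and only if `f = 36`. -/
theorem stmt_18 (f : ℤ) (hf : 16 ≤ f) (hev : Even f) :
    Real.sin (6 * π / (f : ℝ)) * Real.sin ((2 / 3 - 4 / (f : ℝ)) * π) =
      Real.sin ((1 / 3 - 2 / (f : ℝ)) * π) * Real.sin ((1 / 3 - 4 / (f : ℝ)) * π) ↔
    f = 36 := by
  have pp := Real.pi_pos
  have hF : (16:ℝ) ≤ (f:ℝ) := by exact_mod_cast hf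
  have hF0 : (0:ℝ) < (f:ℝ) := by linarith
  set t : ℝ := π / (f:ℝ) with htdef
  have ht0 : 0 < t := div_pos pp hF0
  have ht16 : t ≤ π/16 := by
    rw [htdef]
    apply div_le_div_of_nonneg_left pp.le (by norm_num) hF
  have a1 : 6 * π / (f:ℝ) = 6*t := by rw [htdef]; ring
  have a2 : (2 / 3 - 4 / (f:ℝ)) * π = 2*π/3 - 4*t := by rw [htdef]; ring
  have a3 : (1 / 3 - 2 / (f:ℝ)) * π = π/3 - 2*t := by rw [htdef]; ring
  have a4 : (1 / 3 - 4 / (f:ℝ)) * π = π/3 - 4*t := by rw [htdef]; ring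
  rw [a1, a2, a3, a4]
  -- positivity of cos (2*t)
  have hcos : 0 < cos (2*t) := by
    apply Real.cos_pos_of_mem_Ioo
    constructor <;> [linarith; linarith]
  -- t₀ = π/36
  have ht36mem : (π/36 : ℝ) ∈ Set.Icc (0:ℝ) (π/16) := ⟨by linarith, by linarith⟩
  have htmem : t ∈ Set.Icc (0:ℝ) (π/16) := ⟨ht0.le, ht16⟩
  have hcos36 : 0 < cos (2*(π/36)) := by
    apply Real.cos_pos_of_mem_Ioo
    constructor <;> [linarith; linarith]
  have hG36 : cos (8*(π/36) - 2*π/3) + Real.sqrt 3 / 4 * tan (2*(π/36)) = 1/4 := by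
    have := stmt18_base
    rw [stmt18_factor (π/36) hcos36.ne'] at this
    have h := (mul_eq_zero.mp this).resolve_left hcos36.ne'
    linarith
  constructor
  · intro heq
    have hE : cos (8*t - 2*π/3) * cos (2*t) - (1/2) * cos (2*t + π/3) = 0 := by
      rw [← stmt18_key]; linarith [stmt18_key t]
    rw [stmt18_factor t hcos.ne'] at hE
    have hG : cos (8*t - 2*π/3) + Real.sqrt 3 / 4 * tan (2*t) = 1/4 := by
      have h := (mul_eq_zero.mp hE).resolve_left hcos.ne'
      linarith
    have hteq : t = π/36 := by
      apply stmt18_mono.injOn htmem ht36mem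
      simp only
      rw [hG, hG36]
    have hfr : (f:ℝ) = 36 := by
      rw [htdef] at hteq
      have h := (div_eq_div_iff hF0.ne' (by norm_num : (36:ℝ) ≠ 0)).mp hteq
      have h2 := mul_left_cancel₀ Real.pi_ne_zero (by linarith : π * 36 = π * (f:ℝ))
      linarith
    exact_mod_cast hfr
  · intro h36
    have hfr : (f:ℝ) = 36 := by exact_mod_cast h36
    have hteq : t = π/36 := by rw [htdef, hfr]
    have hE : cos (8*t - 2*π/3) * cos (2*t) - (1/2) * cos (2*t + π/3) = 0 := by
      rw [hteq]; exact stmt18_base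
    linarith [stmt18_key t]
end

section
/- For every even integer f ≥ 6, sin((1/2 − 2/f)·π)·sin((1/2 − 6/f)·π) ≠ (sin(4π/f))². -/
open Real

private lemma cheb_aux (θ : ℝ) (hθ : Real.cos θ = 3/4) :
    ∀ n : ℕ, ∃ a b : ℤ, Odd a ∧ Odd b ∧
      2 * Real.cos (((n : ℝ) + 1) * θ) = (a : ℝ) / 2 ^ (n + 1) ∧
      2 * Real.cos (((n : ℝ) + 2) * θ) = (b : ℝ) / 2 ^ (n + 2) := by
  intro n
  induction n with
  | zero =>
    refine ⟨3, 1, ⟨1, by ring⟩, ⟨0, by ring⟩, ?_, ?_⟩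
    · norm_num [hθ]
    · push_cast
      have h2 : ((0 : ℝ) + 2) * θ = 2 * θ := by ring
      rw [h2, Real.cos_two_mul, hθ]
      norm_num
  | succ n ih =>
    obtain ⟨a, b, ha, hb, h1, h2⟩ := ih
    refine ⟨b, 3 * b - 4 * a, hb, ?_, ?_, ?_⟩
    · rcases hb with ⟨c, hc⟩
      exact ⟨3 * c + 1 - 2 * a, by omega⟩
    · push_cast
      have e : ((n : ℝ) + 1 + 1) * θ = ((n : ℝ) + 2) * θ := by ring
      rw [e, h2]
    · have hsum : Real.cos (((n : ℝ) + 3) * θ) + Real.cos (((n : ℝ) + 1) * θ)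
          = 2 * Real.cos (((n : ℝ) + 2) * θ) * Real.cos θ := by
        have e1 : ((n : ℝ) + 3) * θ = ((n : ℝ) + 2) * θ + θ := by ring
        have e2 : ((n : ℝ) + 1) * θ = ((n : ℝ) + 2) * θ - θ := by ring
        rw [e1, e2, Real.cos_add, Real.cos_sub]; ring
      have h3 : 2 * Real.cos (((n : ℝ) + 3) * θ)
          = 3 / 2 * (2 * Real.cos (((n : ℝ) + 2) * θ)) - 2 * Real.cos (((n : ℝ) + 1) * θ) := by
        linear_combination 2 * hsum + 4 * Real.cos (((n : ℝ) + 2) * θ) * hθ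
      push_cast
      have e3 : ((n : ℝ) + 1 + 2) * θ = ((n : ℝ) + 3) * θ := by ring
      rw [e3, h3, h1, h2]
      push_cast
      field_simp
      ring

private lemma no_rat_cos (k : ℕ) (hk : 1 ≤ k) (θ : ℝ) (hθ : Real.cos θ = 3/4)
    (hkθ : (k : ℝ) * θ = 2 * π) : False := by
  obtain ⟨n, rfl⟩ : ∃ n, k = n + 1 := ⟨k - 1, by omega⟩
  obtain ⟨a, b, ha, hb, h1, h2⟩ := cheb_aux θ hθ n
  have hc : Real.cos (((n : ℝ) + 1) * θ) = 1 := by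
    have : ((n : ℝ) + 1) * θ = 2 * π := by push_cast at hkθ ⊢; linarith [hkθ]
    rw [this, Real.cos_two_pi]
  rw [hc] at h1
  have h4 : (a : ℝ) = 2 ^ (n + 2) := by
    have h2p : (0 : ℝ) < 2 ^ (n + 1) := by positivity
    field_simp at h1
    rw [← h1]; ring
  have : a = 2 ^ (n + 2) := by exact_mod_cast h4
  rcases ha with ⟨c, hc'⟩
  have : (2 : ℤ) ^ (n + 2) = 2 * c + 1 := by omega
  have heven : (2 : ℤ) ∣ 2 ^ (n + 2) := dvd_pow_self 2 (by omega)
  omega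

/-- Final step of Proposition 7.3: for even `f ≥ 6`, Coolsaet's equality for the
vertices `α²β, αγ², γ²δ²` fails. -/
theorem stmt_19 (f : ℤ) (hf : 6 ≤ f) (hev : Even f) :
    Real.sin ((1 / 2 - 2 / (f : ℝ)) * π) * Real.sin ((1 / 2 - 6 / (f : ℝ)) * π) ≠
      Real.sin (4 * π / (f : ℝ)) ^ 2 := by
  intro h
  have hf6 : (6 : ℝ) ≤ (f : ℝ) := by exact_mod_cast hf
  have hf0 : (0 : ℝ) < (f : ℝ) := by linarith
  have hfne : (f : ℝ) ≠ 0 := ne_of_gt hf0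
  set y : ℝ := 2 * π / (f : ℝ) with hy
  have e1 : (1 / 2 - 2 / (f : ℝ)) * π = π / 2 - y := by
    rw [hy]; field_simp
  have e2 : (1 / 2 - 6 / (f : ℝ)) * π = π / 2 - 3 * y := by
    rw [hy]; field_simp; ring
  have e3 : 4 * π / (f : ℝ) = 2 * y := by
    rw [hy]; field_simp; ring
  rw [e1, e2, e3, Real.sin_pi_div_two_sub, Real.sin_pi_div_two_sub,
    Real.cos_three_mul, Real.sin_two_mul] at h
  have key : Real.cos y ^ 2 * (8 * Real.cos y ^ 2 - 7) = 0 := by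
    linear_combination h + 4 * Real.cos y ^ 2 * Real.sin_sq y
  have hypos : 0 < Real.cos y := by
    apply Real.cos_pos_of_mem_Ioo
    constructor
    · have : 0 < y := by positivity
      linarith [Real.pi_pos]
    · have hle : y ≤ π / 3 := by
        rw [hy, div_le_iff₀ hf0]
        nlinarith [Real.pi_pos]
      linarith [Real.pi_pos]
  have hsq : Real.cos y ^ 2 = 7 / 8 := by
    rcases mul_eq_zero.mp key with h' | h'
    · nlinarith
    · linarith
  have hcos2 : Real.cos (2 * y) = 3 / 4 := by
    rw [Real.cos_two_mul, hsq]; norm_num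
  obtain ⟨k, hk⟩ := hev
  have hk3 : 3 ≤ k := by omega
  obtain ⟨m, hm⟩ : ∃ m : ℕ, f = 2 * (m : ℤ) ∧ 3 ≤ m := ⟨k.toNat, by omega, by omega⟩
  obtain ⟨hm1, hm2⟩ := hm
  apply no_rat_cos m (by omega) (2 * y) hcos2
  have hfk : (f : ℝ) = 2 * (m : ℝ) := by exact_mod_cast congrArg (Int.cast : ℤ → ℝ) hm1
  have hmne : (m : ℝ) ≠ 0 := by
    have : 3 ≤ (m : ℝ) := by exact_mod_cast hm2
    linarith
  rw [hy, hfk]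
  field_simp
end
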